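/- Let x₁, …, x_n ∈ ℝ^d, ε > 0, and let K̄ be the row-normalized Gibbs kernel. For α, β ∈ [0,∞)ⁿ define the modified entropic optimal transport cost ÕT_ε(α, β) = inf{ε·Σ_{ij} γ_{ij}·log(γ_{ij}/(αᵢ·K̄_{ij})) : γ ∈ Π(α,β)}. Then for all u, v ∈ ℝⁿ, sup{⟨u,α⟩ + ⟨v,β⟩ − ÕT_ε(α,β) : α, β ∈ [0,∞)ⁿ} equals 0 if uᵢ ≤ −ε·log(Σⱼ K̄_{ij}·exp(vⱼ/ε)) for every i, and equals +∞ otherwise. -/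

import Mathlib

open scoped ENNReal NNReal Classical BigOperators

/-- The Gibbs kernel `K_{ij} = exp(−‖xᵢ − xⱼ‖²/(2ε))`. -/
noncomputable def gibbsK {n d : ℕ} (x : Fin n → EuclideanSpace ℝ (Fin d)) (ε : ℝ)
    (i j : Fin n) : ℝ :=
  Real.exp (-‖x i - x j‖ ^ 2 / (2 * ε))

/-- The row-normalized Gibbs kernel `K̄_{ij} = K_{ij}/Σ_k K_{ik}`. -/
noncomputable def gibbsKbar {n d : ℕ} (x : Fin n → EuclideanSpace ℝ (Fin d)) (ε : ℝ)
    (i j : Fin n) : ℝ :=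
  gibbsK x ε i j / ∑ k, gibbsK x ε i k

/-- The modified entropic optimal transport cost
`ÕT_ε(α, β) = inf {ε·Σ_{ij} γ_{ij}·log(γ_{ij}/(αᵢ·K̄_{ij})) : γ ∈ Π(α,β)}`
(the infimum over the empty set being `+∞`).  Terms with `γ_{ij} = 0` contribute `0`. -/
noncomputable def OTtilde {n d : ℕ} (x : Fin n → EuclideanSpace ℝ (Fin d)) (ε : ℝ)
    (α β : Fin n → ℝ≥0) : EReal :=
  ⨅ γ : {γ : Fin n → Fin n → ℝ≥0 //
      (∀ i, ∑ j, γ i j = α i) ∧ (∀ j, ∑ i, γ i j = β j)},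
    ((ε * ∑ i, ∑ j, (γ.1 i j : ℝ) *
        Real.log ((γ.1 i j : ℝ) / ((α i : ℝ) * gibbsKbar x ε i j)) : ℝ) : EReal)

/-!
Under the condition, the Fenchel–Young inequality `a s ≤ a log (a / c) + c eˢ - a`, applied to
`a = γᵢⱼ`, `c = αᵢ K̄ᵢⱼ`, `s = (uᵢ + vⱼ) / ε` and summed over a coupling `γ`, bounds
`⟨u, α⟩ + ⟨v, β⟩` by the entropic cost of `γ` plus `ε Σᵢ αᵢ (e^{uᵢ/ε} Σⱼ K̄ᵢⱼ e^{vⱼ/ε} - 1) ≤ 0`,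
and `α = β = 0` gives the value `0`. If the condition fails in row `i`, the coupling carrying mass
`t` out of `i` along the Gibbs weights `K̄ᵢⱼ e^{vⱼ/ε}` is the equality case, and its value
`t (uᵢ + ε log Σⱼ K̄ᵢⱼ e^{vⱼ/ε})` is unbounded in `t > 0`.
-/

open Real Finset

/-- Fenchel–Young inequality for `a ↦ a log (a / c) - a`, whose convex conjugate is `s ↦ c eˢ`. -/
theorem mul_le_mul_log_div_add_mul_exp_sub {a c : ℝ} (s : ℝ) (ha : 0 ≤ a) (hc : 0 < c) :
    a * s ≤ a * log (a / c) + c * exp s - a := by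
  rcases ha.eq_or_lt with rfl | ha
  · simp only [zero_mul, zero_add, sub_zero]
    positivity
  have hexp : a * exp (s - log (a / c)) = c * exp s := by
    rw [exp_sub, exp_log (by positivity)]
    field_simp
  nlinarith [mul_le_mul_of_nonneg_left (add_one_le_exp (s - log (a / c))) ha.le]

theorem exp_div_mul_le_one_of_le_neg_mul_log {ε u S : ℝ} (hε : 0 < ε) (hS : 0 < S)
    (hu : u ≤ -ε * log S) : exp (u / ε) * S ≤ 1 := by
  have : u / ε + log S ≤ 0 := by
    rw [div_add' _ _ _ hε.ne']
    exact div_nonpos_of_nonpos_of_nonneg (by linarith) hε.le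
  simpa [exp_add, exp_log hS] using exp_le_one_iff.mpr this

section Row

variable {ι : Type*} [Fintype ι] {ε u : ℝ} {k v g : ι → ℝ}

theorem mul_sum_add_sum_mul_le_entropy (hε : 0 < ε) (hk : ∀ j, 0 < k j) (hg : ∀ j, 0 ≤ g j)
    (hu : u ≤ -ε * log (∑ j, k j * exp (v j / ε))) :
    u * ∑ j, g j + ∑ j, v j * g j ≤ ε * ∑ j, g j * log (g j / ((∑ j, g j) * k j)) := by
  generalize ha_def : ∑ j, g j = a
  rcases (ha_def ▸ sum_nonneg fun j _ => hg j : 0 ≤ a).eq_or_lt with rfl | ha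
  · have hg0 : ∀ j, g j = 0 := fun j =>
      (sum_eq_zero_iff_of_nonneg fun j _ => hg j).1 ha_def j (mem_univ j)
    simp [hg0]
  set S := ∑ j, k j * exp (v j / ε)
  have hS : 0 < S := sum_pos (fun j _ => mul_pos (hk j) (exp_pos _))
    (nonempty_of_sum_ne_zero (ha_def ▸ ha.ne'))
  have hpartition : ∑ j, a * k j * exp ((u + v j) / ε) = a * (exp (u / ε) * S) := by
    simp only [S, mul_sum, add_div, exp_add]
    exact sum_congr rfl fun j _ => by ring
  calc u * a + ∑ j, v j * g j = ε * ∑ j, g j * ((u + v j) / ε) := by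
        rw [← ha_def, mul_sum, ← sum_add_distrib, mul_sum]
        refine sum_congr rfl fun j _ => ?_
        field_simp
    _ ≤ ε * ∑ j, (g j * log (g j / (a * k j)) + a * k j * exp ((u + v j) / ε) - g j) := by
        gcongr with j
        exact mul_le_mul_log_div_add_mul_exp_sub _ (hg j) (mul_pos ha (hk j))
    _ = ε * (∑ j, g j * log (g j / (a * k j)) + a * (exp (u / ε) * S - 1)) := by
        rw [sum_sub_distrib, sum_add_distrib, hpartition, ha_def]
        ring
    _ ≤ ε * ∑ j, g j * log (g j / (a * k j)) := by
        have := exp_div_mul_le_one_of_le_neg_mul_log hε hS hu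
        gcongr
        nlinarith

end Row

section GibbsWeights

variable {ι : Type*} [Fintype ι]

noncomputable def gibbsWeights (k v : ι → ℝ) (ε : ℝ) (j : ι) : ℝ :=
  k j * exp (v j / ε) / ∑ i, k i * exp (v i / ε)

variable [Nonempty ι] {k : ι → ℝ} (v : ι → ℝ) (ε : ℝ)

theorem sum_mul_exp_pos (hk : ∀ j, 0 < k j) : 0 < ∑ j, k j * exp (v j / ε) :=
  sum_pos (fun j _ => mul_pos (hk j) (exp_pos _)) univ_nonempty

theorem gibbsWeights_pos (hk : ∀ j, 0 < k j) (j : ι) : 0 < gibbsWeights k v ε j :=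
  div_pos (mul_pos (hk j) (exp_pos _)) (sum_mul_exp_pos v ε hk)

theorem sum_gibbsWeights (hk : ∀ j, 0 < k j) : ∑ j, gibbsWeights k v ε j = 1 := by
  simp only [gibbsWeights, ← sum_div, div_self (sum_mul_exp_pos v ε hk).ne']

/-- Equality case of `mul_sum_add_sum_mul_le_entropy`. -/
theorem mul_sum_mul_log_gibbsWeights (hε : ε ≠ 0) (hk : ∀ j, 0 < k j) {t : ℝ} (ht : t ≠ 0) :
    ε * ∑ j, t * gibbsWeights k v ε j * log (t * gibbsWeights k v ε j / (t * k j)) =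
      ∑ j, v j * (t * gibbsWeights k v ε j) - ε * t * log (∑ j, k j * exp (v j / ε)) := by
  have hS := sum_mul_exp_pos v ε hk
  have hlog (j : ι) : log (t * gibbsWeights k v ε j / (t * k j)) =
      v j / ε - log (∑ j, k j * exp (v j / ε)) := by
    have hk := (hk j).ne'
    rw [← log_exp (v j / ε), ← log_div (exp_ne_zero _) hS.ne', gibbsWeights]
    field_simp
  have hsum := sum_gibbsWeights v ε hk
  simp only [hlog, mul_sub, sum_sub_distrib]
  congr 1
  · rw [mul_sum]
    exact sum_congr rfl fun j _ => by field_simp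
  · rw [← sum_mul, ← mul_sum, hsum]
    ring

end GibbsWeights

section OTtilde

variable {n d : ℕ} (x : Fin n → EuclideanSpace ℝ (Fin d)) {ε : ℝ}

theorem gibbsKbar_pos (i j : Fin n) : 0 < gibbsKbar x ε i j :=
  div_pos (exp_pos _) (sum_pos (fun _ _ => exp_pos _) ⟨i, mem_univ i⟩)

noncomputable def OTtildeConjugate (ε : ℝ) (u v : Fin n → ℝ) : EReal :=
  ⨆ (α : Fin n → ℝ≥0) (β : Fin n → ℝ≥0),
    ((((∑ i, u i * (α i : ℝ)) + ∑ i, v i * (β i : ℝ) : ℝ) : EReal) - OTtilde x ε α β)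

theorem pairing_le_OTtilde (hε : 0 < ε) {u v : Fin n → ℝ}
    (hu : ∀ i, u i ≤ -ε * log (∑ j, gibbsKbar x ε i j * exp (v j / ε))) (α β : Fin n → ℝ≥0) :
    (((∑ i, u i * (α i : ℝ)) + ∑ i, v i * (β i : ℝ) : ℝ) : EReal) ≤ OTtilde x ε α β := by
  refine le_iInf fun ⟨γ, hrow, hcol⟩ => EReal.coe_le_coe_iff.mpr ?_
  have hα (i : Fin n) : (α i : ℝ) = ∑ j, (γ i j : ℝ) := by rw [← hrow i, NNReal.coe_sum]
  have hβ (j : Fin n) : (β j : ℝ) = ∑ i, (γ i j : ℝ) := by rw [← hcol j, NNReal.coe_sum]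
  calc ∑ i, u i * (α i : ℝ) + ∑ j, v j * (β j : ℝ)
      = ∑ i, (u i * ∑ j, (γ i j : ℝ) + ∑ j, v j * (γ i j : ℝ)) := by
        simp only [hα, hβ, mul_sum, sum_add_distrib]
        rw [sum_comm (f := fun j i => v j * (γ i j : ℝ))]
    _ ≤ ∑ i, ε * ∑ j, (γ i j : ℝ) * log ((γ i j : ℝ) / ((∑ j, (γ i j : ℝ)) * gibbsKbar x ε i j)) :=
        sum_le_sum fun i _ => mul_sum_add_sum_mul_le_entropy hε (gibbsKbar_pos x i)
          (fun j => (γ i j).coe_nonneg) (hu i)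
    _ = ε * ∑ i, ∑ j, (γ i j : ℝ) * log ((γ i j : ℝ) / ((α i : ℝ) * gibbsKbar x ε i j)) := by
        simp only [hα, mul_sum]

theorem OTtilde_zero_le : OTtilde x ε 0 0 ≤ 0 :=
  iInf_le_of_le ⟨0, fun _ => by simp, fun _ => by simp⟩ (by simp)

theorem OTtilde_single_le (i : Fin n) (β : Fin n → ℝ≥0) :
    OTtilde x ε (Pi.single i (∑ j, β j)) β ≤
      ((ε * ∑ j, (β j : ℝ) * log ((β j : ℝ) / ((∑ j, (β j : ℝ)) * gibbsKbar x ε i j)) : ℝ) :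
        EReal) := by
  refine iInf_le_of_le ⟨Pi.single i β, fun k => ?_, fun j => ?_⟩ ?_
  · rcases eq_or_ne k i with rfl | hk
    · simp
    · simp [hk]
  · simp [Pi.single_apply, apply_ite (fun f : Fin n → ℝ≥0 => f j)]
  · rw [Fintype.sum_eq_single i fun k hk => by simp [hk]]
    simp

theorem OTtildeConjugate_le_zero (hε : 0 < ε) {u v : Fin n → ℝ}
    (hu : ∀ i, u i ≤ -ε * log (∑ j, gibbsKbar x ε i j * exp (v j / ε))) :
    OTtildeConjugate x ε u v ≤ 0 :=
  iSup₂_le fun α β => EReal.sub_nonpos.mpr (pairing_le_OTtilde x hε hu α β)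

theorem OTtildeConjugate_nonneg (u v : Fin n → ℝ) : 0 ≤ OTtildeConjugate x ε u v :=
  le_iSup₂_of_le 0 0 (by simpa using OTtilde_zero_le x)

theorem mul_le_OTtildeConjugate (hε : 0 < ε) (u v : Fin n → ℝ) (i : Fin n) {t : ℝ}
    (ht : 0 < t) :
    ((t * (u i + ε * log (∑ j, gibbsKbar x ε i j * exp (v j / ε))) : ℝ) : EReal) ≤
      OTtildeConjugate x ε u v := by
  have : Nonempty (Fin n) := ⟨i⟩
  have hK : ∀ j, 0 < gibbsKbar x ε i j := gibbsKbar_pos x i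
  let β : Fin n → ℝ≥0 := fun j => ⟨t * gibbsWeights (gibbsKbar x ε i) v ε j,
    (mul_pos ht (gibbsWeights_pos v ε hK j)).le⟩
  have hβ_apply (j : Fin n) : (β j : ℝ) = t * gibbsWeights (gibbsKbar x ε i) v ε j := rfl
  have hβ : ∑ j, (β j : ℝ) = t := by
    simp only [hβ_apply, ← mul_sum, sum_gibbsWeights v ε hK, mul_one]
  have hα : ∑ k, u k * ((Pi.single i (∑ j, β j) : Fin n → ℝ≥0) k : ℝ) = u i * t := by
    rw [Fintype.sum_eq_single i fun k hk => by simp [hk]]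
    simp [← hβ]
  refine le_iSup₂_of_le (Pi.single i (∑ j, β j)) β ?_
  calc ((t * (u i + ε * log (∑ j, gibbsKbar x ε i j * exp (v j / ε))) : ℝ) : EReal)
      = ((u i * t + ∑ j, v j * β j : ℝ) : EReal) -
          ((ε * ∑ j, (β j : ℝ) * log ((β j : ℝ) / ((∑ j, (β j : ℝ)) * gibbsKbar x ε i j)) : ℝ) :
            EReal) := by
        rw [← EReal.coe_sub, hβ]
        simp only [hβ_apply]
        rw [mul_sum_mul_log_gibbsWeights v ε hε.ne' hK ht.ne']
        congr 1
        ring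
    _ ≤ _ := EReal.sub_le_sub (by rw [hα]) (OTtilde_single_le x i β)

theorem OTtildeConjugate_eq_top (hε : 0 < ε) {u : Fin n → ℝ} (v : Fin n → ℝ) {i : Fin n}
    (hi : -ε * log (∑ j, gibbsKbar x ε i j * exp (v j / ε)) < u i) :
    OTtildeConjugate x ε u v = ⊤ := by
  refine (EReal.eq_top_iff_forall_lt _).mpr fun r => ?_
  obtain ⟨t, ht, hr⟩ := exists_pos_lt_mul (by linarith : 0 < u i + ε * log _) r
  exact (EReal.coe_lt_coe_iff.mpr hr).trans_le (mul_le_OTtildeConjugate x hε u v i ht)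

end OTtilde

theorem OTtilde_conjugate_general (n d : ℕ) (x : Fin n → EuclideanSpace ℝ (Fin d))
    (ε : ℝ) (hε : 0 < ε) (u v : Fin n → ℝ) :
    (⨆ (α : Fin n → ℝ≥0) (β : Fin n → ℝ≥0),
        ((((∑ i, u i * (α i : ℝ)) + ∑ i, v i * (β i : ℝ) : ℝ) : EReal) - OTtilde x ε α β))
    = if ∀ i, u i ≤ -ε * Real.log (∑ j, gibbsKbar x ε i j * Real.exp (v j / ε))
      then 0 else ⊤ := by
  change OTtildeConjugate x ε u v = _
  split_ifs with hu
  · exact le_antisymm (OTtildeConjugate_le_zero x hε hu) (OTtildeConjugate_nonneg x u v)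
  · obtain ⟨i, hi⟩ := not_forall.mp hu
    exact OTtildeConjugate_eq_top x hε v (not_le.mp hi)

/-- The convex conjugate of the modified entropic optimal transport cost:
`sup {⟨u,α⟩ + ⟨v,β⟩ − ÕT_ε(α,β) : α, β ∈ [0,∞)ⁿ}` equals `0` if
`uᵢ ≤ −ε·log(Σⱼ K̄_{ij}·exp(vⱼ/ε))` for every `i`, and `+∞` otherwise. -/
theorem OTtilde_conjugate (n d : ℕ) (hn : 1 ≤ n) (x : Fin n → EuclideanSpace ℝ (Fin d))
    (ε : ℝ) (hε : 0 < ε) (u v : Fin n → ℝ) :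
    (⨆ (α : Fin n → ℝ≥0) (β : Fin n → ℝ≥0),
        ((((∑ i, u i * (α i : ℝ)) + ∑ i, v i * (β i : ℝ) : ℝ) : EReal) - OTtilde x ε α β))
    = if ∀ i, u i ≤ -ε * Real.log (∑ j, gibbsKbar x ε i j * Real.exp (v j / ε))
      then 0 else ⊤ :=
  OTtilde_conjugate_general n d x ε hε u v
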